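/- arXiv:1011.4833 — 2 statements merged into one kernel-verified Lean document; each statement's English description precedes it below -/
import Mathlib

section
/- The ordered disjunction operator is associative up to HT-equivalence: for all formulas F, G, H, the formula F × (G × H) is HT-equivalent to (F × G) × H. -/
inductive Form (α : Type) : Type
  | atom : α → Form α
  | fls  : Form α
  | and  : Form α → Form α → Form α
  | or   : Form α → Form α → Form α
  | imp  : Form α → Form α → Form α

namespace Form

variable {α : Type}

/-- ¬F abbreviates F → ⊥ -/
def neg (F : Form α) : Form α := imp F fls

/-- ⊤ abbreviates ⊥ → ⊥ -/
def tru : Form α := imp fls fls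

/-- ordered disjunction F × G := F ∨ (¬F ∧ G) -/
def ox (F G : Form α) : Form α := or F (and (neg F) G)

/-- classical satisfaction -/
def csat (T : Set α) : Form α → Prop
  | atom p  => p ∈ T
  | fls     => False
  | and F G => csat T F ∧ csat T G
  | or F G  => csat T F ∨ csat T G
  | imp F G => csat T F → csat T G

/-- here-and-there satisfaction (for interpretations ⟨H,T⟩ with H ⊆ T) -/
def htsat (H T : Set α) : Form α → Prop
  | atom p  => p ∈ H
  | fls     => False
  | and F G => htsat H T F ∧ htsat H T G
  | or F G  => htsat H T F ∨ htsat H T G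
  | imp F G => (csat T F → csat T G) ∧ (¬ htsat H T F ∨ htsat H T G)

end Form

/-- HT-equivalence: satisfied by exactly the same HT-interpretations -/
def HTEquiv {α : Type} (F G : Form α) : Prop :=
  ∀ H T : Set α, H ⊆ T → (Form.htsat H T F ↔ Form.htsat H T G)

/-- ⟨T,T⟩ is an equilibrium model of the theory Γ -/
def EqModel {α : Type} (Γ : Set (Form α)) (T : Set α) : Prop :=
  (∀ F ∈ Γ, Form.htsat T T F) ∧ ∀ H : Set α, H ⊂ T → ¬ (∀ F ∈ Γ, Form.htsat H T F)

/-- iterated ordered disjunction, associated to the left; ⊥ when empty -/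
def oxList {α : Type} : List (Form α) → Form α
  | []      => Form.fls
  | a :: as => as.foldl Form.ox a

/-- iterated disjunction, associated to the left; ⊥ when empty -/
def orList {α : Type} : List (Form α) → Form α
  | []      => Form.fls
  | a :: as => as.foldl Form.or a

/-- iterated conjunction, associated to the left; ⊤ when empty -/
def andList {α : Type} : List (Form α) → Form α
  | []      => Form.tru
  | a :: as => as.foldl Form.and a

/-! By persistence (whatever ⟨H,T⟩ satisfies, T satisfies classically), ⟨H,T⟩ ⊨ ¬F exactly when
T ⊭ F. Hence ⟨H,T⟩ ⊨ F × G iff ⟨H,T⟩ ⊨ F, or T ⊭ F and ⟨H,T⟩ ⊨ G, while classically F × G is just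
F ∨ G; with these two descriptions both bracketings unfold to the same propositional formula. -/

namespace Form

variable {α : Type} {H T : Set α}

theorem csat_of_htsat (hs : H ⊆ T) : ∀ {F : Form α}, htsat H T F → csat T F
  | atom _, h => hs h
  | fls, h => h
  | and _ _, ⟨hF, hG⟩ => ⟨csat_of_htsat hs hF, csat_of_htsat hs hG⟩
  | or _ _, Or.inl hF => Or.inl (csat_of_htsat hs hF)
  | or _ _, Or.inr hG => Or.inr (csat_of_htsat hs hG)
  | imp _ _, h => h.1

theorem htsat_neg_iff (hs : H ⊆ T) {F : Form α} : htsat H T (neg F) ↔ ¬ csat T F := by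
  simp only [neg, htsat, csat, or_false]
  exact ⟨And.left, fun hT => ⟨hT, fun hH => hT (csat_of_htsat hs hH)⟩⟩

theorem htsat_ox_iff (hs : H ⊆ T) {F G : Form α} :
    htsat H T (ox F G) ↔ htsat H T F ∨ (¬ csat T F ∧ htsat H T G) := by
  rw [ox, htsat, htsat, htsat_neg_iff hs]

theorem csat_ox_iff {F G : Form α} : csat T (ox F G) ↔ csat T F ∨ csat T G := by
  simp only [ox, neg, csat]
  tauto

end Form

theorem ox_associative {α : Type} (F G K : Form α) :
    HTEquiv (Form.ox F (Form.ox G K)) (Form.ox (Form.ox F G) K) := by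
  intro H T hs
  simp only [Form.htsat_ox_iff hs, Form.csat_ox_iff]
  tauto
end

section
/- For any LPOD P, the theory consisting of the formulas (×A) ← (∧B) ∧ (∧¬B') for each rule of P is HT-equivalent to the theory P*: every HT-interpretation satisfies all rules of P (read with × as the derived operator) if and only if it satisfies all rules of P*. -/
/-- A rule of a logic program with ordered disjunction:
    (×A) ← (∧B) ∧ (∧¬B') with A, B, B' lists of atoms. -/
structure LPODRule (α : Type) where
  A  : List α
  B  : List α
  B' : List α

namespace LPODRule

variable {α : Type}

def negAtom (a : α) : Form α := Form.neg (Form.atom a)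

/-- the body (∧B) ∧ (∧¬B') of a rule -/
def body (r : LPODRule α) : Form α :=
  Form.and (andList (r.B.map Form.atom)) (andList (r.B'.map negAtom))

/-- the rule as the HT formula (×A) ← (∧B) ∧ (∧¬B') -/
def form (r : LPODRule α) : Form α :=
  Form.imp r.body (oxList (r.A.map Form.atom))

/-- the rule read classically: (∨A) ← (∧B) ∧ (∧¬B') -/
def clForm (r : LPODRule α) : Form α :=
  Form.imp r.body (orList (r.A.map Form.atom))

/-- the translation r*: the rules
    A[i] ∨ ¬A[i] ← (∧B) ∧ (∧¬B') ∧ (∧¬A[1..i−1]) for i = 1..|A|,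
    plus the constraint ⊥ ← (∧B) ∧ (∧¬B') ∧ (∧¬A). -/
def star (r : LPODRule α) : List (Form α) :=
  ((List.range r.A.length).attach.map (fun i =>
    Form.imp
      (Form.and r.body (andList ((r.A.take i.1).map negAtom)))
      (Form.or (Form.atom (r.A.get ⟨i.1, List.mem_range.mp i.2⟩))
               (Form.neg (Form.atom (r.A.get ⟨i.1, List.mem_range.mp i.2⟩)))))) ++
  [Form.imp (Form.and r.body (andList (r.A.map negAtom))) Form.fls]

end LPODRule

/-!
For a single rule `r`, both sides unfold to the same condition on `⟨H, T⟩`. In `⟨H, T⟩` the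
ordered disjunction `×A` holds iff some `A[i] ∈ H` while `¬A[j]` holds for every `j < i`, that
is, iff the first atom of `A` whose negation fails exists and lies in `H`. The rules
`A[i] ∨ ¬A[i] ← … ∧ ¬A[1..i-1]` of `r*` say that this first atom, if there is one, lies in
`H`, and the constraint says that there is one. On the classical side `×A` is just `∨A`, which is
what the constraint says in `T`, while the rules of `r*` are classical tautologies.
-/

namespace List

variable {β : Type*}

theorem foldl_iff_and_forall {v : β → Prop} {f : β → β → β}
    (hf : ∀ x y, v (f x y) ↔ v x ∧ v y) (l : List β) (acc : β) :
    v (l.foldl f acc) ↔ v acc ∧ ∀ x ∈ l, v x := by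
  induction l generalizing acc with
  | nil => simp
  | cons x l ih => simp [ih, hf, and_assoc]

theorem foldl_iff_or_exists {v : β → Prop} {f : β → β → β}
    (hf : ∀ x y, v (f x y) ↔ v x ∨ v y) (l : List β) (acc : β) :
    v (l.foldl f acc) ↔ v acc ∨ ∃ x ∈ l, v x := by
  induction l generalizing acc with
  | nil => simp
  | cons x l ih => simp [ih, hf, or_assoc]

theorem exists_take_cons {b : β} {l : List β} {N P : β → Prop} :
    (∃ i, ∃ hi : i < (b :: l).length, (∀ x ∈ (b :: l).take i, N x) ∧ P (b :: l)[i]) ↔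
      P b ∨ N b ∧ ∃ i, ∃ hi : i < l.length, (∀ x ∈ l.take i, N x) ∧ P l[i] := by
  simpa [Fin.exists_iff, and_assoc] using
    Fin.exists_fin_succ
      (P := fun i : Fin (b :: l).length => (∀ x ∈ (b :: l).take i, N x) ∧ P (b :: l)[i])

theorem forall_take_cons {b : β} {l : List β} {N P : β → Prop} :
    (∀ i, ∀ hi : i < (b :: l).length, (∀ x ∈ (b :: l).take i, N x) → P (b :: l)[i]) ↔
      P b ∧ ∀ i, ∀ hi : i < l.length, N b → (∀ x ∈ l.take i, N x) → P l[i] := by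
  simpa [Fin.forall_iff, imp_forall_iff] using
    Fin.forall_fin_succ
      (P := fun i : Fin (b :: l).length => (∀ x ∈ (b :: l).take i, N x) → P (b :: l)[i])

/-- Both sides say that the first element of `l` outside `N` exists and satisfies `P`. -/
theorem exists_take_iff {l : List β} {N P : β → Prop} (hPN : ∀ x, P x → ¬N x) :
    (∃ i, ∃ hi : i < l.length, (∀ x ∈ l.take i, N x) ∧ P l[i]) ↔
      (∀ i, ∀ hi : i < l.length, (∀ x ∈ l.take i, N x) → P l[i] ∨ N l[i]) ∧
        ∃ x ∈ l, ¬N x := by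
  induction l with
  | nil => simp
  | cons b l ih =>
    rw [exists_take_cons, forall_take_cons (P := fun x => P x ∨ N x), ih]
    by_cases hb : N b
    · have hPb : ¬P b := fun h => hPN b h hb
      simp [hb, hPb]
    · simp [hb]

end List

namespace Form

variable {α : Type} {H T : Set α}

theorem htsat_atom (a : α) : htsat H T (atom a) ↔ a ∈ H := Iff.rfl

theorem csat_atom (a : α) : csat T (atom a) ↔ a ∈ T := Iff.rfl

theorem htsat_and (F G : Form α) : htsat H T (and F G) ↔ htsat H T F ∧ htsat H T G := Iff.rfl

theorem csat_and (F G : Form α) : csat T (and F G) ↔ csat T F ∧ csat T G := Iff.rfl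

theorem htsat_imp (F G : Form α) :
    htsat H T (imp F G) ↔ (csat T F → csat T G) ∧ (htsat H T F → htsat H T G) :=
  and_congr_right fun _ => imp_iff_not_or.symm

theorem csat_neg (F : Form α) : csat T F.neg ↔ ¬csat T F := Iff.rfl

theorem htsat_neg (F : Form α) : htsat H T F.neg ↔ ¬csat T F ∧ ¬htsat H T F := by
  simp [neg, htsat, csat]

theorem not_htsat_neg_of_htsat {F : Form α} (h : htsat H T F) : ¬htsat H T F.neg :=
  fun hn => ((htsat_neg F).1 hn).2 h

theorem htsat_imp_or_neg (F G : Form α) :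
    htsat H T (imp F (or G G.neg)) ↔ (htsat H T F → htsat H T G ∨ htsat H T G.neg) := by
  rw [htsat_imp]
  exact and_iff_right fun _ => em (csat T G)

theorem htsat_ox (F G : Form α) :
    htsat H T (ox F G) ↔ htsat H T F ∨ htsat H T F.neg ∧ htsat H T G := Iff.rfl

theorem csat_ox (F G : Form α) : csat T (ox F G) ↔ csat T F ∨ csat T G := by
  simp only [ox, neg, csat]
  tauto

theorem htsat_neg_ox (F G : Form α) :
    htsat H T (ox F G).neg ↔ htsat H T F.neg ∧ htsat H T G.neg := by
  simp only [htsat_neg, csat_ox, htsat_ox]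
  tauto

theorem csat_andList (l : List (Form α)) : csat T (andList l) ↔ ∀ F ∈ l, csat T F := by
  cases l with
  | nil => simp [andList, tru, csat]
  | cons F l => simpa [andList] using List.foldl_iff_and_forall csat_and l F

theorem htsat_andList (l : List (Form α)) :
    htsat H T (andList l) ↔ ∀ F ∈ l, htsat H T F := by
  cases l with
  | nil => simp [andList, tru, htsat, csat]
  | cons F l => simpa [andList] using List.foldl_iff_and_forall htsat_and l F

theorem csat_oxList (l : List (Form α)) : csat T (oxList l) ↔ ∃ F ∈ l, csat T F := by
  cases l with
  | nil => simp [oxList, csat]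
  | cons F l => simpa [oxList] using List.foldl_iff_or_exists csat_ox l F

theorem htsat_foldl_ox (l : List (Form α)) (F : Form α) :
    htsat H T (l.foldl ox F) ↔ htsat H T F ∨ htsat H T F.neg ∧
      ∃ i, ∃ hi : i < l.length, (∀ G ∈ l.take i, htsat H T G.neg) ∧ htsat H T l[i] := by
  induction l generalizing F with
  | nil => simp
  | cons G l ih =>
    rw [List.foldl_cons, ih, htsat_ox, htsat_neg_ox, List.exists_take_cons]
    tauto

theorem htsat_oxList (l : List (Form α)) :
    htsat H T (oxList l) ↔
      ∃ i, ∃ hi : i < l.length, (∀ F ∈ l.take i, htsat H T F.neg) ∧ htsat H T l[i] := by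
  cases l with
  | nil => simp [oxList, htsat]
  | cons F l => rw [List.exists_take_cons, ← htsat_foldl_ox]; rfl

end Form

namespace LPODRule

open Form

variable {α : Type} {H T : Set α}

theorem forall_mem_star {p : Form α → Prop} (r : LPODRule α) :
    (∀ F ∈ r.star, p F) ↔
      (∀ i, ∀ hi : i < r.A.length, p (imp (and r.body (andList ((r.A.take i).map negAtom)))
        (or (atom r.A[i]) (atom r.A[i]).neg))) ∧
      p (and r.body (andList (r.A.map negAtom))).neg := by
  simp only [star, List.forall_mem_append, List.forall_mem_map, List.forall_mem_singleton]
  exact and_congr_left' ⟨fun h i hi => h ⟨i, List.mem_range.2 hi⟩ (List.mem_attach _ _),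
    fun h j _ => h j (List.mem_range.1 j.2)⟩

theorem htsat_form (r : LPODRule α) :
    htsat H T r.form ↔ (csat T r.body → ∃ a ∈ r.A, a ∈ T) ∧
      (htsat H T r.body → ∃ i, ∃ hi : i < r.A.length,
        (∀ a ∈ r.A.take i, htsat H T (atom a).neg) ∧ r.A[i] ∈ H) := by
  simp [form, htsat_imp, csat, htsat, csat_oxList, htsat_oxList, ← List.map_take]

theorem forall_htsat_star (r : LPODRule α) :
    (∀ F ∈ r.star, htsat H T F) ↔ (csat T r.body → ∃ a ∈ r.A, a ∈ T) ∧
      (htsat H T r.body →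
        (∀ i, ∀ hi : i < r.A.length, (∀ a ∈ r.A.take i, htsat H T (atom a).neg) →
          r.A[i] ∈ H ∨ htsat H T (atom r.A[i]).neg) ∧
        ∃ a ∈ r.A, ¬htsat H T (atom a).neg) := by
  rw [forall_mem_star, htsat_neg (and r.body _)]
  simp only [htsat_imp_or_neg, htsat_and, csat_and, htsat_andList, csat_andList,
    List.forall_mem_map, negAtom, csat_neg, csat_atom, htsat_atom, and_imp, not_and, not_forall,
    not_not, exists_prop]
  exact ⟨fun ⟨hrules, hcl, hht⟩ =>
      ⟨hcl, fun hb => ⟨fun i hi => hrules i hi hb, hht hb⟩⟩,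
    fun ⟨hcl, hht⟩ => ⟨fun i hi hb => (hht hb).1 i hi, hcl, fun hb => (hht hb).2⟩⟩

theorem htsat_form_iff_forall_htsat_star (r : LPODRule α) :
    htsat H T r.form ↔ ∀ F ∈ r.star, htsat H T F := by
  rw [htsat_form, forall_htsat_star,
    List.exists_take_iff (N := fun a => htsat H T (atom a).neg) (P := (· ∈ H))
      fun a => not_htsat_neg_of_htsat (F := atom a)]

end LPODRule

theorem lpod_star_ht_equiv_general {α : Type} (P : List (LPODRule α))
    (H T : Set α) :
    (∀ r ∈ P, Form.htsat H T r.form) ↔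
    (∀ r ∈ P, ∀ F ∈ r.star, Form.htsat H T F) :=
  forall₂_congr fun r _ => r.htsat_form_iff_forall_htsat_star

/-- for any LPOD P, P is HT-equivalent to P*. -/
theorem lpod_star_ht_equiv {α : Type} (P : List (LPODRule α))
    (H T : Set α) (hsub : H ⊆ T) :
    (∀ r ∈ P, Form.htsat H T r.form) ↔
    (∀ r ∈ P, ∀ F ∈ r.star, Form.htsat H T F) :=
  lpod_star_ht_equiv_general P H T
end
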